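/- Let (F,θ) be an ID-field of characteristic p > 0 and let E be an ID-field extension of F. If R_1 ⊆ E and R_2 ⊆ E are F-subalgebras, stable under the iterative derivation of E, such that R_1 is a PPV-ring over F for some IDE θ(y) = A·y with Quot(R_1) = E, and R_2 is a PPV-ring over F for some (possibly different) IDE θ(y) = A'·y with Quot(R_2) = E, then R_1 = R_2. In other words, the PPV-ring inside a PPV-field is unique and independent of the particular IDE. -/

import Mathlib

open scoped TensorProduct

/-- `binom(i+j, i)` for multi-indices: `∏ μ, (i μ + j μ).choose (i μ)`. -/
def multiChoose {m : ℕ} (i j : Fin m →₀ ℕ) : ℕ :=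
  ∏ μ : Fin m, Nat.choose (i μ + j μ) (i μ)

/-- An `m`-variate iterative derivation on a commutative ring `R`: a ring homomorphism
`θ : R → R[[T_1,…,T_m]]`, written `θ(r) = Σ_k θ^{(k)}(r)·T^k`, with `θ^{(0)} = id` and
`θ^{(i)} ∘ θ^{(j)} = binom(i+j,i)·θ^{(i+j)}` for all multi-indices `i, j`. -/
structure IterativeDerivation (m : ℕ) (R : Type*) [CommRing R] where
  toRingHom : R →+* MvPowerSeries (Fin m) R
  coeff_zero : ∀ r : R, MvPowerSeries.coeff (R := R) 0 (toRingHom r) = r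
  iterate : ∀ (i j : Fin m →₀ ℕ) (r : R),
    MvPowerSeries.coeff (R := R) i (toRingHom (MvPowerSeries.coeff (R := R) j (toRingHom r))) =
      multiChoose i j • MvPowerSeries.coeff (R := R) (i + j) (toRingHom r)

namespace IterativeDerivation

/-- The coefficient maps `θ^{(k)} : R → R` of an iterative derivation. -/
noncomputable def D {m : ℕ} {R : Type*} [CommRing R] (θ : IterativeDerivation m R)
    (k : Fin m →₀ ℕ) (r : R) : R :=
  MvPowerSeries.coeff (R := R) k (θ.toRingHom r)

end IterativeDerivation

/-- An ID-ring extension: the iterative derivation `θR` on `R` restricts to `θF` on `F`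
(via the algebra map). -/
def IterativeDerivation.Extends {m : ℕ} {F R : Type*} [CommRing F] [CommRing R] [Algebra F R]
    (θF : IterativeDerivation m F) (θR : IterativeDerivation m R) : Prop :=
  ∀ (k : Fin m →₀ ℕ) (f : F), θR.D k (algebraMap F R f) = algebraMap F R (θF.D k f)

/-- `R` is ID-simple: no nontrivial ideals stable under all the `θ^{(k)}`. -/
def IterativeDerivation.IDSimple {m : ℕ} {R : Type*} [CommRing R]
    (θ : IterativeDerivation m R) : Prop :=
  ∀ I : Ideal R, (∀ (k : Fin m →₀ ℕ), ∀ x ∈ I, θ.D k x ∈ I) → I = ⊥ ∨ I = ⊤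

/-- The coefficient matrices `A_k` of an iterative differential equation `θ(y) = A·y`
over `(F, θ)`: `A_0 = 1` and
`binom(k+l,l)·A_{k+l} = Σ_{i+j=l} θ^{(i)}(A_k)·A_j` for all `k, l`. -/
def IsIDE {m n : ℕ} {F : Type*} [Field F] (θ : IterativeDerivation m F)
    (A : (Fin m →₀ ℕ) → Matrix (Fin n) (Fin n) F) : Prop :=
  A 0 = 1 ∧
  ∀ k l : Fin m →₀ ℕ,
    multiChoose l k • A (k + l) =
      ∑ ij ∈ Finset.HasAntidiagonal.antidiagonal l, (A k).map (θ.D ij.1) * A ij.2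

/-- `Y ∈ GL_n(R)` is a fundamental solution matrix for the IDE `θ(y) = A·y`:
`θ^{(k)}(Y) = A_k·Y` (entrywise) for all `k`. -/
def IsFundamentalMatrix {m n : ℕ} {F R : Type*} [Field F] [CommRing R] [Algebra F R]
    (θR : IterativeDerivation m R) (A : (Fin m →₀ ℕ) → Matrix (Fin n) (Fin n) F)
    (Y : Matrix (Fin n) (Fin n) R) : Prop :=
  IsUnit Y.det ∧
  ∀ k : Fin m →₀ ℕ, Y.map (θR.D k) = (A k).map (algebraMap F R) * Y

/-- Condition (4) of a PPV-ring: the constants of `R` are exactly (the images of) the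
constants of `F`. -/
def ConstantsEq {m : ℕ} {F R : Type*} [CommRing F] [CommRing R] [Algebra F R]
    (θF : IterativeDerivation m F) (θR : IterativeDerivation m R) : Prop :=
  ∀ r : R, (∀ k : Fin m →₀ ℕ, k ≠ 0 → θR.D k r = 0) →
    ∃ f : F, (∀ k : Fin m →₀ ℕ, k ≠ 0 → θF.D k f = 0) ∧ algebraMap F R f = r

/-- `(R, θR)` is a pseudo Picard–Vessiot ring over `(F, θF)` for the IDE given by `A`:
it is ID-simple, has a fundamental solution matrix `Y` which together with `det(Y)⁻¹`
generates `R` as an `F`-algebra, and has the same constants as `F`. -/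
def IsPPVRing {m n : ℕ} {F R : Type*} [Field F] [CommRing R] [Algebra F R]
    (θF : IterativeDerivation m F) (θR : IterativeDerivation m R)
    (A : (Fin m →₀ ℕ) → Matrix (Fin n) (Fin n) F) : Prop :=
  θF.Extends θR ∧ θR.IDSimple ∧
  (∃ Y : Matrix (Fin n) (Fin n) R, IsFundamentalMatrix θR A Y ∧
    Algebra.adjoin F
      ((Set.range fun ij : Fin n × Fin n => Y ij.1 ij.2) ∪ {Ring.inverse Y.det}) = ⊤) ∧
  ConstantsEq θF θR

/-- `S` (an `F`-subalgebra of the ID-field `E`, stable under the iterative derivation of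
`E`) is a PPV-ring over `F` for the IDE given by `A`: it is stable under the derivation,
ID-simple, contains a fundamental solution matrix `Y` which together with `det(Y)⁻¹`
generates `S` as an `F`-algebra, and its constants are exactly the constants of `F`. -/
def IsPPVSubalgebra {m n : ℕ} {F E : Type*} [Field F] [Field E] [Algebra F E]
    (θF : IterativeDerivation m F) (θE : IterativeDerivation m E)
    (S : Subalgebra F E) (A : (Fin m →₀ ℕ) → Matrix (Fin n) (Fin n) F) : Prop :=
  (∀ (k : Fin m →₀ ℕ), ∀ x ∈ S, θE.D k x ∈ S) ∧
  (∀ I : Ideal S,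
    (∀ (k : Fin m →₀ ℕ) (x : S), x ∈ I → ∀ y : S, (y : E) = θE.D k (x : E) → y ∈ I) →
      I = ⊥ ∨ I = ⊤) ∧
  (∃ Y : Matrix (Fin n) (Fin n) E,
    (∀ i j : Fin n, Y i j ∈ S) ∧ Y.det ≠ 0 ∧ Y.det⁻¹ ∈ S ∧
    (∀ k : Fin m →₀ ℕ, Y.map (θE.D k) = (A k).map (algebraMap F E) * Y) ∧
    Algebra.adjoin F
      ((Set.range fun ij : Fin n × Fin n => Y ij.1 ij.2) ∪ {Y.det⁻¹}) = S) ∧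
  (∀ x ∈ S, (∀ k : Fin m →₀ ℕ, k ≠ 0 → θE.D k x = 0) →
    ∃ f : F, (∀ k : Fin m →₀ ℕ, k ≠ 0 → θF.D k f = 0) ∧ algebraMap F E f = x)

/-- The quotient field of a subset `S` of a field `E`, as a subset of `E`. -/
def quotSet {E : Type*} [Field E] (S : Set E) : Set E :=
  {e : E | ∃ r ∈ S, ∃ s ∈ S, s ≠ 0 ∧ e = r / s}

/-! Let `S ⊆ E` be a derivation-stable, ID-simple subalgebra with quotient field `E`. If all
derivatives `θ^{(k)}(x)` of some `x ∈ E` lie in one finitely generated `F`-subspace, then a common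
denominator `d ≠ 0` of its generators lies in the ID-stable ideal `{r ∈ S | r·θ^{(l)}(x) ∈ S ∀ l}`,
which is therefore all of `S`, so `x ∈ S`. The entries of a fundamental matrix `Y` satisfy this
since `θ(Y) = A·Y`, and so does `det(Y)⁻¹` since `θ(det Y) = det A · det Y`. Hence each PPV-ring in
`E` contains the other. -/

lemma exists_mul_mem_of_quotSet_eq_univ {F E : Type*} [CommRing F] [Field E] [Algebra F E]
    {S : Subalgebra F E} (hq : quotSet (S : Set E) = Set.univ) (s : Finset E) :
    ∃ d ∈ S, d ≠ 0 ∧ ∀ e ∈ s, d * e ∈ S := by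
  classical
  induction s using Finset.induction_on with
  | empty => exact ⟨1, S.one_mem, one_ne_zero, by simp⟩
  | insert a s _ ih =>
    obtain ⟨d, hd, hd0, hds⟩ := ih
    obtain ⟨r, hr, b, hb, hb0, rfl⟩ : a ∈ quotSet (S : Set E) := hq ▸ Set.mem_univ a
    refine ⟨b * d, S.mul_mem hb hd, mul_ne_zero hb0 hd0, ?_⟩
    rintro e he
    rcases Finset.mem_insert.mp he with rfl | he
    · rw [mul_right_comm, mul_div_cancel₀ _ hb0]
      exact S.mul_mem hr hd
    · rw [mul_assoc]
      exact S.mul_mem hb (hds e he)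

namespace IterativeDerivation

open Finset.HasAntidiagonal

section CommRing

variable {m : ℕ} {E : Type*} [CommRing E] (θ : IterativeDerivation m E)

lemma D_zero (r : E) : θ.D 0 r = r :=
  θ.coeff_zero r

lemma D_D (i j : Fin m →₀ ℕ) (r : E) : θ.D i (θ.D j r) = multiChoose i j • θ.D (i + j) r :=
  θ.iterate i j r

lemma D_mul (k : Fin m →₀ ℕ) (a b : E) :
    θ.D k (a * b) = ∑ ij ∈ antidiagonal k, θ.D ij.1 a * θ.D ij.2 b := by
  rw [D, map_mul, MvPowerSeries.coeff_mul]
  rfl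

variable {F : Type*} [CommRing F] [Algebra F E]

def IsStable (S : Subalgebra F E) : Prop :=
  ∀ (k : Fin m →₀ ℕ), ∀ x ∈ S, θ.D k x ∈ S

def IsIDSimpleSubalgebra (S : Subalgebra F E) : Prop :=
  ∀ I : Ideal S,
    (∀ (k : Fin m →₀ ℕ) (x : S), x ∈ I → ∀ y : S, (y : E) = θ.D k (x : E) → y ∈ I) →
      I = ⊥ ∨ I = ⊤

def denomIdeal (S : Subalgebra F E) (x : E) : Ideal S where
  carrier := {r | ∀ l, (r : E) * θ.D l x ∈ S}
  add_mem' {a b} ha hb l := by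
    simpa only [Subalgebra.coe_add, add_mul] using S.add_mem (ha l) (hb l)
  zero_mem' l := by simp
  smul_mem' c r hr l := by
    simpa only [smul_eq_mul, Subalgebra.coe_mul, mul_assoc] using S.mul_mem c.2 (hr l)

variable {θ} {S : Subalgebra F E}

lemma D_mul_D_mem {x r : E} (hS : θ.IsStable S) (hr : ∀ l, r * θ.D l x ∈ S)
    (k : Fin m →₀ ℕ) : ∀ l, θ.D k r * θ.D l x ∈ S := by
  induction k using WellFoundedLT.induction with
  | _ k ih =>
  intro l
  have hsum := hS k _ (hr l)
  have hk0 : (k, 0) ∈ antidiagonal k := mem_antidiagonal.mpr (add_zero k)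
  rw [D_mul, ← Finset.add_sum_erase _ _ hk0, θ.D_zero] at hsum
  refine (add_mem_cancel_right (S.sum_mem fun ij hij => ?_)).mp hsum
  obtain ⟨hne, hij⟩ := Finset.mem_erase.mp hij
  rw [mem_antidiagonal] at hij
  -- a term with `ij.2 ≠ 0` involves a derivative of `r` of strictly smaller order
  have hlt : ij.1 < k := by
    refine lt_of_le_of_ne (hij ▸ le_self_add) fun h => hne (Prod.ext h ?_)
    simpa [h] using hij
  rw [θ.D_D, mul_smul_comm]
  exact nsmul_mem (ih ij.1 hlt _) _

lemma denomIdeal_stable (hS : θ.IsStable S) (x : E) (k : Fin m →₀ ℕ) (r : S)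
    (hr : r ∈ θ.denomIdeal S x) (y : S) (hy : (y : E) = θ.D k (r : E)) :
    y ∈ θ.denomIdeal S x := fun l => hy ▸ D_mul_D_mem hS hr k l

lemma mem_of_mul_D_mem (hS : θ.IsStable S) (hsimple : θ.IsIDSimpleSubalgebra S)
    {x d : E} (hd : d ∈ S) (hd0 : d ≠ 0) (h : ∀ k, d * θ.D k x ∈ S) : x ∈ S := by
  rcases hsimple _ (denomIdeal_stable hS x) with hbot | htop
  · have hdI : (⟨d, hd⟩ : S) ∈ θ.denomIdeal S x := h
    rw [hbot, Ideal.mem_bot] at hdI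
    exact absurd (congrArg Subtype.val hdI) hd0
  · have h1 : (1 : S) ∈ θ.denomIdeal S x := htop ▸ Submodule.mem_top
    simpa [θ.D_zero] using h1 0

end CommRing

section Field

variable {m : ℕ} {F E : Type*} [CommRing F] [Field E] [Algebra F E]
  {θ : IterativeDerivation m E} {S : Subalgebra F E}

lemma mem_of_D_mem_span (hS : θ.IsStable S) (hsimple : θ.IsIDSimpleSubalgebra S)
    (hq : quotSet (S : Set E) = Set.univ) (s : Finset E) {x : E}
    (h : ∀ k, θ.D k x ∈ Submodule.span F (s : Set E)) : x ∈ S := by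
  obtain ⟨d, hd, hd0, hds⟩ := exists_mul_mem_of_quotSet_eq_univ hq s
  have hspan : Submodule.span F (s : Set E) ≤
      (Subalgebra.toSubmodule S).comap (LinearMap.mulLeft F d) :=
    Submodule.span_le.mpr hds
  exact mem_of_mul_D_mem hS hsimple hd hd0 fun k => hspan (h k)

end Field

end IterativeDerivation

section FundamentalMatrix

open MvPowerSeries

variable {m n : ℕ} {F E : Type*} [Field F] [Field E] [Algebra F E]

/-- The matrix `A(T) = Σ_k A_k T^k` of power series. -/
def seriesMatrix (A : (Fin m →₀ ℕ) → Matrix (Fin n) (Fin n) F) :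
    Matrix (Fin n) (Fin n) (MvPowerSeries (Fin m) F) :=
  Matrix.of fun i j k => A k i j

namespace IterativeDerivation

variable {θ : IterativeDerivation m E} {A : (Fin m →₀ ℕ) → Matrix (Fin n) (Fin n) F}
  {Y : Matrix (Fin n) (Fin n) E}

lemma D_entry_eq (hY : ∀ k, Y.map (θ.D k) = (A k).map (algebraMap F E) * Y)
    (k : Fin m →₀ ℕ) (i j : Fin n) : θ.D k (Y i j) = ∑ l, A k i l • Y l j := by
  rw [← Matrix.map_apply (f := θ.D k), hY, Matrix.mul_apply]
  simp [Algebra.smul_def]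

lemma map_toRingHom_eq (hY : ∀ k, Y.map (θ.D k) = (A k).map (algebraMap F E) * Y) :
    Y.map θ.toRingHom = (seriesMatrix A).map (map (algebraMap F E)) * Y.map C := by
  ext i j k
  rw [Matrix.map_apply, Matrix.mul_apply, map_sum]
  simp only [Matrix.map_apply, coeff_mul_C, coeff_map]
  exact (D_entry_eq hY k i j).trans (by simp [seriesMatrix, Algebra.smul_def]; rfl)

lemma toRingHom_det_eq (hY : ∀ k, Y.map (θ.D k) = (A k).map (algebraMap F E) * Y) :
    θ.toRingHom Y.det = map (algebraMap F E) (seriesMatrix A).det * C Y.det := by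
  rw [RingHom.map_det, RingHom.mapMatrix_apply, map_toRingHom_eq hY, Matrix.det_mul,
    ← RingHom.mapMatrix_apply, ← RingHom.map_det, ← RingHom.mapMatrix_apply, ← RingHom.map_det]

lemma D_det_inv_eq (hY : ∀ k, Y.map (θ.D k) = (A k).map (algebraMap F E) * Y)
    (hdet : Y.det ≠ 0) (k : Fin m →₀ ℕ) :
    θ.D k Y.det⁻¹ = algebraMap F E (coeff k (seriesMatrix A).det⁻¹) * Y.det⁻¹ := by
  have hθdet := toRingHom_det_eq (θ := θ) hY
  set δ := (seriesMatrix A).det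
  -- constant coefficients of `θ(det Y) = det A(T) · det Y`, as `θ^{(0)} = id`
  have hδ : constantCoeff δ = 1 := by
    have h0 := congrArg constantCoeff hθdet
    rw [← coeff_zero_eq_constantCoeff_apply, ← D, θ.D_zero, map_mul, constantCoeff_map,
      constantCoeff_C, eq_comm, mul_eq_right₀ hdet, map_eq_one_iff _ (algebraMap F E).injective]
      at h0
    exact h0
  have hinv : θ.toRingHom Y.det⁻¹ = map (algebraMap F E) δ⁻¹ * C Y.det⁻¹ := by
    refine left_inv_eq_right_inv (a := θ.toRingHom Y.det) ?_ ?_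
    · rw [← map_mul, inv_mul_cancel₀ hdet, map_one]
    · rw [hθdet, mul_mul_mul_comm, ← map_mul, ← map_mul,
        MvPowerSeries.mul_inv_cancel _ (by simp [hδ]), mul_inv_cancel₀ hdet, map_one, map_one,
        one_mul]
  rw [D, hinv, coeff_mul_C, coeff_map]

end IterativeDerivation

end FundamentalMatrix

open IterativeDerivation in
lemma IsPPVSubalgebra.le_of_quotSet_eq_univ {m n : ℕ} {F E : Type*} [Field F] [Field E]
    [Algebra F E] {θF : IterativeDerivation m F} {θE : IterativeDerivation m E}
    {R S : Subalgebra F E} {A : (Fin m →₀ ℕ) → Matrix (Fin n) (Fin n) F}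
    (hS : θE.IsStable S) (hsimple : θE.IsIDSimpleSubalgebra S)
    (hq : quotSet (S : Set E) = Set.univ) (hR : IsPPVSubalgebra θF θE R A) : R ≤ S := by
  classical
  obtain ⟨-, -, ⟨Y, -, hdet, -, hY, hadj⟩, -⟩ := hR
  rw [← hadj]
  refine Algebra.adjoin_le ?_
  rintro x (⟨⟨i, j⟩, rfl⟩ | rfl)
  · refine mem_of_D_mem_span hS hsimple hq
      (Finset.univ.image fun ij : Fin n × Fin n => Y ij.1 ij.2) fun k => ?_
    rw [D_entry_eq hY]
    exact Submodule.sum_mem _ fun l _ => Submodule.smul_mem _ _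
      (Submodule.subset_span (Finset.mem_image_of_mem _ (Finset.mem_univ (l, j))))
  · refine mem_of_D_mem_span hS hsimple hq {Y.det⁻¹} fun k => ?_
    rw [D_det_inv_eq hY hdet, ← Algebra.smul_def, Finset.coe_singleton]
    exact Submodule.smul_mem _ _ (Submodule.mem_span_singleton_self _)

theorem ppvRing_unique_general
    (m n₁ n₂ : ℕ)
    (F E : Type) [Field F] [Field E] [Algebra F E]
    (θF : IterativeDerivation m F) (θE : IterativeDerivation m E)
    (R₁ R₂ : Subalgebra F E)
    (A₁ : (Fin m →₀ ℕ) → Matrix (Fin n₁) (Fin n₁) F)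
    (A₂ : (Fin m →₀ ℕ) → Matrix (Fin n₂) (Fin n₂) F)
    (h₁ : IsPPVSubalgebra θF θE R₁ A₁) (h₂ : IsPPVSubalgebra θF θE R₂ A₂)
    (hq₁ : quotSet (R₁ : Set E) = Set.univ) (hq₂ : quotSet (R₂ : Set E) = Set.univ) :
    R₁ = R₂ :=
  le_antisymm (h₁.le_of_quotSet_eq_univ h₂.1 h₂.2.1 hq₂) (h₂.le_of_quotSet_eq_univ h₁.1 h₁.2.1 hq₁)

/-- Let `E` be a PPV-field over the ID-field `(F, θF)` of characteristic `p > 0`. If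
`R₁, R₂ ⊆ E` are derivation-stable `F`-subalgebras which are PPV-rings over `F` for some
IDEs `θ(y) = A·y` resp. `θ(y) = A'·y`, both with quotient field `E`, then `R₁ = R₂`:
the PPV-ring inside a PPV-field is unique and independent of the particular IDE. -/
theorem ppvRing_unique
    (m n₁ n₂ p : ℕ) (hp : p.Prime)
    (F E : Type) [Field F] [CharP F p] [Field E] [Algebra F E]
    (θF : IterativeDerivation m F) (θE : IterativeDerivation m E)
    (hext : θF.Extends θE)
    (R₁ R₂ : Subalgebra F E)
    (A₁ : (Fin m →₀ ℕ) → Matrix (Fin n₁) (Fin n₁) F) (hA₁ : IsIDE θF A₁)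
    (A₂ : (Fin m →₀ ℕ) → Matrix (Fin n₂) (Fin n₂) F) (hA₂ : IsIDE θF A₂)
    (h₁ : IsPPVSubalgebra θF θE R₁ A₁) (h₂ : IsPPVSubalgebra θF θE R₂ A₂)
    (hq₁ : quotSet (R₁ : Set E) = Set.univ) (hq₂ : quotSet (R₂ : Set E) = Set.univ) :
    R₁ = R₂ :=
  ppvRing_unique_general m n₁ n₂ F E θF θE R₁ R₂ A₁ A₂ h₁ h₂ hq₁ hq₂
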